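/- arXiv:2312.10808 — 4 statements merged into one kernel-verified Lean document; each statement's English description precedes it below -/
import Mathlib

section
/- Let E be a real inner product space and let x, y, z ∈ E be unit vectors. Then (1 − ⟨x,y⟩²)(1 − ⟨y,z⟩²) ≥ (⟨x,y⟩⟨y,z⟩ − ⟨z,x⟩)². -/
open RealInnerProductSpace

/-- For unit vectors x, y, z in a real inner product space,
(1 − ⟨x,y⟩²)(1 − ⟨y,z⟩²) ≥ (⟨x,y⟩⟨y,z⟩ − ⟨z,x⟩)². -/
theorem one_sub_inner_sq_mul_ge {E : Type*} [NormedAddCommGroup E] [InnerProductSpace ℝ E]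
    (x y z : E) (hx : ‖x‖ = 1) (hy : ‖y‖ = 1) (hz : ‖z‖ = 1) :
    (1 - ⟪x, y⟫ ^ 2) * (1 - ⟪y, z⟫ ^ 2) ≥ (⟪x, y⟫ * ⟪y, z⟫ - ⟪z, x⟫) ^ 2 := by
  have hcs := real_inner_mul_inner_self_le (x - ⟪x, y⟫ • y) (z - ⟪y, z⟫ • y)
  simp only [inner_sub_sub_self, inner_smul_left, inner_smul_right, real_inner_smul_left,
    real_inner_smul_right, inner_sub_left, inner_sub_right] at hcs
  rw [real_inner_self_eq_norm_sq, real_inner_self_eq_norm_sq] at hcs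
  have h1 : ⟪y, y⟫ = 1 := by
    rw [real_inner_self_eq_norm_sq, hy]; norm_num
  have h2 : ⟪y, x⟫ = ⟪x, y⟫ := (real_inner_comm y x).symm
  have h3 : ⟪z, y⟫ = ⟪y, z⟫ := (real_inner_comm z y).symm
  have h5 : ⟪z, z⟫ = 1 := by
    rw [real_inner_self_eq_norm_sq, hz]; norm_num
  have h4 : ⟪x, z⟫ = ⟪z, x⟫ := (real_inner_comm x z).symm
  rw [hx, hy] at hcs
  simp only [RCLike.star_def, conj_trivial, h1, h2, h3, h4, h5] at hcs
  nlinarith [hcs]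
end

section
/- Let E be a real inner product space and let x, y, z ∈ E be nonzero vectors. Define the line angle ∠(u,v) = arccos(|⟨u,v⟩| / (‖u‖ ‖v‖)) for nonzero u, v. Then the triangle inequality holds: ∠(x,y) ≤ ∠(x,z) + ∠(z,y). -/
open RealInnerProductSpace

/-- The unsigned line angle between two nonzero vectors:
∠(u,v) = arccos(|⟨u,v⟩| / (‖u‖ ‖v‖)). -/
noncomputable def lineAngle {E : Type*} [NormedAddCommGroup E] [InnerProductSpace ℝ E]
    (u v : E) : ℝ :=
  Real.arccos (|⟪u, v⟫| / (‖u‖ * ‖v‖))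

/-! The line angle between `u` and `v` is the ordinary angle between `u` and whichever of
`v`, `-v` makes a nonnegative inner product with `u`. Choosing such signs first for `z` and
then for `y` reduces the claim to the triangle inequality for ordinary angles
(`InnerProductGeometry.angle_le_angle_add_angle`). -/

open InnerProductGeometry

section

variable {E : Type*} [NormedAddCommGroup E] [InnerProductSpace ℝ E]

@[simp]
lemma lineAngle_neg_right (u v : E) : lineAngle u (-v) = lineAngle u v := by
  simp only [lineAngle, inner_neg_right, abs_neg, norm_neg]

@[simp]
lemma lineAngle_neg_left (u v : E) : lineAngle (-u) v = lineAngle u v := by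
  simp only [lineAngle, inner_neg_left, abs_neg, norm_neg]

lemma lineAngle_le_angle (u v : E) : lineAngle u v ≤ angle u v :=
  Real.arccos_le_arccos (div_le_div_of_nonneg_right (le_abs_self _) (by positivity))

lemma lineAngle_eq_angle_of_inner_nonneg {u v : E} (h : 0 ≤ ⟪u, v⟫) :
    lineAngle u v = angle u v := by
  rw [lineAngle, abs_of_nonneg h, angle]

lemma exists_eq_or_eq_neg_inner_nonneg (u v : E) : ∃ w, (w = v ∨ w = -v) ∧ 0 ≤ ⟪u, w⟫ := by
  rcases le_total 0 ⟪u, v⟫ with h | h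
  · exact ⟨v, .inl rfl, h⟩
  · exact ⟨-v, .inr rfl, by rwa [inner_neg_right, neg_nonneg]⟩

end

theorem lineAngle_triangle_general {E : Type*} [NormedAddCommGroup E] [InnerProductSpace ℝ E]
    (x y z : E) :
    lineAngle x y ≤ lineAngle x z + lineAngle z y := by
  obtain ⟨z', hz', hxz'⟩ := exists_eq_or_eq_neg_inner_nonneg x z
  obtain ⟨y', hy', hzy'⟩ := exists_eq_or_eq_neg_inner_nonneg z' y
  have hxz : lineAngle x z' = lineAngle x z := by rcases hz' with rfl | rfl <;> simp
  have hzy : lineAngle z' y' = lineAngle z y := by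
    rcases hz' with rfl | rfl <;> rcases hy' with rfl | rfl <;> simp
  have hxy : lineAngle x y' = lineAngle x y := by rcases hy' with rfl | rfl <;> simp
  calc lineAngle x y = lineAngle x y' := hxy.symm
    _ ≤ angle x y' := lineAngle_le_angle x y'
    _ ≤ angle x z' + angle z' y' := angle_le_angle_add_angle x z' y'
    _ = lineAngle x z + lineAngle z y := by
      rw [← lineAngle_eq_angle_of_inner_nonneg hxz', ← lineAngle_eq_angle_of_inner_nonneg hzy',
        hxz, hzy]

/-- The triangle inequality for the line angle between nonzero vectors in a real
inner product space: ∠(x,y) ≤ ∠(x,z) + ∠(z,y). -/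
theorem lineAngle_triangle {E : Type*} [NormedAddCommGroup E] [InnerProductSpace ℝ E]
    (x y z : E) (hx : x ≠ 0) (hy : y ≠ 0) (hz : z ≠ 0) :
    lineAngle x y ≤ lineAngle x z + lineAngle z y :=
  lineAngle_triangle_general x y z
end

section
/- Let E be a real inner product space, let x, y, z ∈ E be unit vectors, and let ∠(u,v) = arccos(|⟨u,v⟩|) denote the line angle between unit vectors u, v. Then cos(∠(x,z)) ≥ cos(∠(x,y) + ∠(y,z)). -/
open RealInnerProductSpace

/-- For unit vectors x, y, z in a real inner product space, with line angle
∠(u,v) = arccos(|⟨u,v⟩|), we have cos(∠(x,z)) ≥ cos(∠(x,y) + ∠(y,z)). -/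
theorem cos_lineAngle_ge {E : Type*} [NormedAddCommGroup E] [InnerProductSpace ℝ E]
    (x y z : E) (hx : ‖x‖ = 1) (hy : ‖y‖ = 1) (hz : ‖z‖ = 1) :
    Real.cos (Real.arccos |⟪x, z⟫|) ≥
      Real.cos (Real.arccos |⟪x, y⟫| + Real.arccos |⟪y, z⟫|) := by
  set a : ℝ := ⟪x, y⟫ with ha'
  set b : ℝ := ⟪y, z⟫ with hb'
  set c : ℝ := ⟪x, z⟫ with hc'
  have ha1 : |a| ≤ 1 := by
    have := abs_real_inner_le_norm x y; rwa [hx, hy, one_mul] at this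
  have hb1 : |b| ≤ 1 := by
    have := abs_real_inner_le_norm y z; rwa [hy, hz, one_mul] at this
  have hc1 : |c| ≤ 1 := by
    have := abs_real_inner_le_norm x z; rwa [hx, hz, one_mul] at this
  have ha2 : a ^ 2 ≤ 1 := by nlinarith [sq_abs a, abs_nonneg a]
  have hb2 : b ^ 2 ≤ 1 := by nlinarith [sq_abs b, abs_nonneg b]
  rw [Real.cos_arccos (by linarith [abs_nonneg c]) hc1, Real.cos_add,
    Real.cos_arccos (by linarith [abs_nonneg a]) ha1,
    Real.cos_arccos (by linarith [abs_nonneg b]) hb1,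
    Real.sin_arccos, Real.sin_arccos, sq_abs, sq_abs]
  -- key: |c - a*b| ≤ √(1-a²) * √(1-b²)
  set x' : E := x - a • y with hx'
  set z' : E := z - b • y with hz'
  have hyy : ⟪y, y⟫ = (1:ℝ) := by
    rw [real_inner_self_eq_norm_sq, hy]; norm_num
  have hxx : ⟪x, x⟫ = (1:ℝ) := by
    rw [real_inner_self_eq_norm_sq, hx]; norm_num
  have hzz : ⟪z, z⟫ = (1:ℝ) := by
    rw [real_inner_self_eq_norm_sq, hz]; norm_num
  have hyx : ⟪y, x⟫ = a := by rw [real_inner_comm]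
  have hzy : ⟪z, y⟫ = b := by rw [real_inner_comm]
  have hxz' : ⟪x', z'⟫ = c - a * b := by
    simp only [hx', hz', inner_sub_left, inner_sub_right, real_inner_smul_left,
      real_inner_smul_right, hyy, ← ha', ← hb', ← hc', hyx, hzy]
    ring
  have hx'n : ‖x'‖ = Real.sqrt (1 - a ^ 2) := by
    have : ⟪x', x'⟫ = 1 - a ^ 2 := by
      simp only [hx', inner_sub_left, inner_sub_right, real_inner_smul_left,
        real_inner_smul_right, hyy, hxx, hyx, ← ha']
      ring
    rw [← Real.sqrt_sq (norm_nonneg x'), ← real_inner_self_eq_norm_sq, this]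
  have hz'n : ‖z'‖ = Real.sqrt (1 - b ^ 2) := by
    have : ⟪z', z'⟫ = 1 - b ^ 2 := by
      simp only [hz', inner_sub_left, inner_sub_right, real_inner_smul_left,
        real_inner_smul_right, hyy, hzz, hzy, ← hb']
      ring
    rw [← Real.sqrt_sq (norm_nonneg z'), ← real_inner_self_eq_norm_sq, this]
  have key : |c - a * b| ≤ Real.sqrt (1 - a ^ 2) * Real.sqrt (1 - b ^ 2) := by
    have := abs_real_inner_le_norm x' z'
    rwa [hxz', hx'n, hz'n] at this
  have h1 : |a| * |b| - |c| ≤ |a * b - c| := by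
    rw [← abs_mul]; exact abs_sub_abs_le_abs_sub _ _
  rw [abs_sub_comm] at h1
  linarith [abs_nonneg c, key, h1]
end

section
/- Let p_i, p_j ∈ ℝ³ be two end nodes with chord L = p_i − p_j ≠ 0, and let a ∈ ℝ³ be a known point. Suppose q, q' ∈ ℝ³ are points such that p_j, q, a are not collinear (i.e., (p_j − q) × (p_j − a) ≠ 0), p_j, q', a are not collinear, and q, q' share the same geometric features with respect to a and L, namely: (i) ‖q − a‖ = ‖q' − a‖, (ii) angle(q − a, L) = angle(q' − a, L) with L × (q − a) ≠ 0 and L × (q' − a) ≠ 0, (iii) ⟨(L × (q − a))/‖L × (q − a)‖, (L × (a − p_j))/‖L × (a − p_j)‖⟩ = ⟨(L × (q' − a))/‖L × (q' − a)‖, (L × (a − p_j))/‖L × (a − p_j)‖⟩ where L × (a − p_j) ≠ 0, and (iv) ⟨L, (p_j − q) × (p_j − a)⟩ = ⟨L, (p_j − q') × (p_j − a)⟩. Then q = q'. -/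
/-!
Write `u = q - a` and `b = a - pj`. Features (i) and (ii) fix `‖u‖` and `⟪L, u⟫`, hence
`‖L × u‖` by Lagrange's identity, so (iii) fixes `⟪L × b, L × u⟫`; (iv) is the triple product
`⟪b, L × u⟫`, and `⟪L, L × u⟫ = 0`. As `L`, `b`, `L × b` span `ℝ³`, this determines `L × u`,
and `L × u` together with `⟪L, u⟫` determines `u` because `L ≠ 0`.
-/

open RealInnerProductSpace

noncomputable def cross3 (x y : EuclideanSpace ℝ (Fin 3)) : EuclideanSpace ℝ (Fin 3) :=
  WithLp.toLp 2 (crossProduct x y)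

open Matrix WithLp InnerProductGeometry

section InnerProductSpace

variable {V : Type*} [NormedAddCommGroup V] [InnerProductSpace ℝ V]

-- Also for `x = 0` or `y = 0`: then both sides vanish, since `0⁻¹ = 0` and `angle x 0 = π / 2`.
lemma real_inner_inv_norm_smul_inv_norm_smul (x y : V) :
    ⟪‖x‖⁻¹ • x, ‖y‖⁻¹ • y⟫ = Real.cos (angle x y) := by
  rw [cos_angle, real_inner_smul_left, real_inner_smul_right, div_eq_inv_mul, mul_inv]
  ring

lemma real_inner_eq_of_norm_eq_of_cos_angle_eq {x y w : V} (hn : ‖x‖ = ‖y‖)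
    (h : Real.cos (angle x w) = Real.cos (angle y w)) : ⟪x, w⟫ = ⟪y, w⟫ := by
  rw [← cos_angle_mul_norm_mul_norm, h, hn, cos_angle_mul_norm_mul_norm]

end InnerProductSpace

section Cross3

variable (x y z w : EuclideanSpace ℝ (Fin 3))

lemma real_inner_eq_dotProduct : ⟪x, y⟫ = ofLp x ⬝ᵥ ofLp y := dotProduct_comm _ _

lemma cross3_sub_right : cross3 x (y - z) = cross3 x y - cross3 x z := by
  simp [cross3]

lemma cross3_sub_sub_eq_cross3_sub_sub : cross3 (x - y) (x - z) = cross3 (y - z) (z - x) := by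
  ext i
  fin_cases i <;> simp [cross3, cross_apply] <;> ring

lemma inner_self_cross3 : ⟪x, cross3 x y⟫ = 0 := by
  simp [real_inner_eq_dotProduct, cross3]

lemma inner_cross3_comm : ⟪x, cross3 y z⟫ = ⟪y, cross3 z x⟫ := by
  rw [real_inner_eq_dotProduct, real_inner_eq_dotProduct]
  exact triple_product_permutation (ofLp x) (ofLp y) (ofLp z)

lemma inner_cross3_cross3 :
    ⟪cross3 x y, cross3 z w⟫ = ⟪x, z⟫ * ⟪y, w⟫ - ⟪x, w⟫ * ⟪y, z⟫ := by
  simp only [real_inner_eq_dotProduct, cross3, cross_dot_cross]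

lemma cross3_cross3_left : cross3 (cross3 x y) z = ⟪x, z⟫ • y - ⟪y, z⟫ • x := by
  simp only [real_inner_eq_dotProduct, cross3, cross_cross_eq_smul_sub_smul]
  rfl

lemma norm_cross3_sq : ‖cross3 x y‖ ^ 2 = ‖x‖ ^ 2 * ‖y‖ ^ 2 - ⟪x, y⟫ ^ 2 := by
  rw [← real_inner_self_eq_norm_sq, inner_cross3_cross3, real_inner_self_eq_norm_sq,
    real_inner_self_eq_norm_sq, real_inner_comm y x]
  ring

end Cross3

section Determination

variable {L b x y : EuclideanSpace ℝ (Fin 3)}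

lemma eq_of_cross3_eq_of_inner_eq (hL : L ≠ 0) (hc : cross3 L x = cross3 L y)
    (hi : ⟪L, x⟫ = ⟪L, y⟫) : x = y := by
  have h := norm_cross3_sq L (x - y)
  rw [cross3_sub_right, hc, sub_self, inner_sub_right, hi, sub_self, norm_zero] at h
  have : ‖L‖ ^ 2 * ‖x - y‖ ^ 2 = 0 := by linarith
  simpa [hL, sub_eq_zero] using this

lemma eq_of_inner_eq_of_cross3_ne_zero (hLb : cross3 L b ≠ 0) (hL : ⟪L, x⟫ = ⟪L, y⟫)
    (hb : ⟪b, x⟫ = ⟪b, y⟫) (hLb' : ⟪cross3 L b, x⟫ = ⟪cross3 L b, y⟫) : x = y :=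
  eq_of_cross3_eq_of_inner_eq hLb (by rw [cross3_cross3_left, cross3_cross3_left, hL, hb]) hLb'

end Determination

theorem point_uniquely_determined_by_features_general
    (pj a q q' : EuclideanSpace ℝ (Fin 3))
    (L : EuclideanSpace ℝ (Fin 3)) (hL : L ≠ 0)
    (hLa : cross3 L (a - pj) ≠ 0)
    (hdist : ‖q - a‖ = ‖q' - a‖)
    (hangle : InnerProductGeometry.angle (q - a) L = InnerProductGeometry.angle (q' - a) L)
    (hcos : ⟪‖cross3 L (q - a)‖⁻¹ • cross3 L (q - a),
              ‖cross3 L (a - pj)‖⁻¹ • cross3 L (a - pj)⟫ =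
            ⟪‖cross3 L (q' - a)‖⁻¹ • cross3 L (q' - a),
              ‖cross3 L (a - pj)‖⁻¹ • cross3 L (a - pj)⟫)
    (hsign : ⟪L, cross3 (pj - q) (pj - a)⟫ = ⟪L, cross3 (pj - q') (pj - a)⟫) :
    q = q' := by
  have hinner : ⟪L, q - a⟫ = ⟪L, q' - a⟫ := by
    simpa only [real_inner_comm L] using
      real_inner_eq_of_norm_eq_of_cos_angle_eq hdist (congrArg Real.cos hangle)
  have hnorm : ‖cross3 L (q - a)‖ = ‖cross3 L (q' - a)‖ := by
    rw [← sq_eq_sq₀ (norm_nonneg _) (norm_nonneg _), norm_cross3_sq, norm_cross3_sq, hdist,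
      hinner]
  have hdihedral :
      ⟪cross3 L (a - pj), cross3 L (q - a)⟫ = ⟪cross3 L (a - pj), cross3 L (q' - a)⟫ := by
    rw [real_inner_inv_norm_smul_inv_norm_smul, real_inner_inv_norm_smul_inv_norm_smul] at hcos
    simpa only [real_inner_comm (cross3 L (a - pj))] using
      real_inner_eq_of_norm_eq_of_cos_angle_eq hnorm hcos
  have htriple : ⟪a - pj, cross3 L (q - a)⟫ = ⟪a - pj, cross3 L (q' - a)⟫ := by
    rwa [cross3_sub_sub_eq_cross3_sub_sub, cross3_sub_sub_eq_cross3_sub_sub,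
      inner_cross3_comm L, inner_cross3_comm L, inner_cross3_comm (q - a),
      inner_cross3_comm (q' - a)] at hsign
  have hcross : cross3 L (q - a) = cross3 L (q' - a) :=
    eq_of_inner_eq_of_cross3_ne_zero hLa (by rw [inner_self_cross3, inner_self_cross3]) htriple
      hdihedral
  exact sub_left_injective (eq_of_cross3_eq_of_inner_eq hL hcross hinner)

/-- Lemma 1: a point q on a spatial curve is uniquely determined by its
geometric features (distance to the predecessor a, angle with the chord
L = p_i − p_j, cosine of the orientation angle, and the sign-determining scalar
triple product), given the predecessor a and the two end nodes p_i, p_j. -/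
theorem point_uniquely_determined_by_features
    (pi pj a q q' : EuclideanSpace ℝ (Fin 3))
    (L : EuclideanSpace ℝ (Fin 3)) (hLdef : L = pi - pj) (hL : L ≠ 0)
    (hnc : cross3 (pj - q) (pj - a) ≠ 0)
    (hnc' : cross3 (pj - q') (pj - a) ≠ 0)
    (hLq : cross3 L (q - a) ≠ 0)
    (hLq' : cross3 L (q' - a) ≠ 0)
    (hLa : cross3 L (a - pj) ≠ 0)
    (hdist : ‖q - a‖ = ‖q' - a‖)
    (hangle : InnerProductGeometry.angle (q - a) L = InnerProductGeometry.angle (q' - a) L)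
    (hcos : ⟪‖cross3 L (q - a)‖⁻¹ • cross3 L (q - a),
              ‖cross3 L (a - pj)‖⁻¹ • cross3 L (a - pj)⟫ =
            ⟪‖cross3 L (q' - a)‖⁻¹ • cross3 L (q' - a),
              ‖cross3 L (a - pj)‖⁻¹ • cross3 L (a - pj)⟫)
    (hsign : ⟪L, cross3 (pj - q) (pj - a)⟫ = ⟪L, cross3 (pj - q') (pj - a)⟫) :
    q = q' :=
  point_uniquely_determined_by_features_general pj a q q' L hL hLa hdist hangle hcos hsign
end
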